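/- arXiv:2310.16201 — 4 statements merged into one kernel-verified Lean document; each statement's English description precedes it below -/
import Mathlib

section
/- Let m, n be positive natural numbers and let F be an m × n real matrix. Then F is a relative matrix (i.e., there exists a family of vectors v_{ij} ∈ ℝ^m indexed by pairs 1 ≤ i < j ≤ n such that F x = Σ_{1 ≤ i < j ≤ n} v_{ij} (x_i − x_j) for every x ∈ ℝ^n) if and only if F · 𝟙 = 0, where 𝟙 ∈ ℝ^n is the vector of all ones. -/
open Matrix BigOperators

/-- An `m × n` real matrix `F` is relative (i.e. there is a family of
vectors `v i j ∈ ℝ^m` for pairs `i < j` with `F x = ∑_{i<j} (x i - x j) • v i j`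
for all `x`) iff `F · 𝟙 = 0`. -/
theorem relative_iff_mulVec_one_eq_zero (m n : ℕ) (hm : 0 < m) (hn : 0 < n)
    (F : Matrix (Fin m) (Fin n) ℝ) :
    (∃ v : Fin n → Fin n → (Fin m → ℝ), ∀ x : Fin n → ℝ,
      F.mulVec x = ∑ i : Fin n, ∑ j : Fin n,
        if i < j then (x i - x j) • v i j else 0) ↔
    F.mulVec (fun _ => (1 : ℝ)) = 0 := by
  constructor
  · rintro ⟨v, hv⟩
    rw [hv (fun _ => (1 : ℝ))]
    simp
  · intro h
    set last : Fin n := ⟨n - 1, Nat.sub_lt hn one_pos⟩ with hlast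
    refine ⟨fun i j => if j = last then (fun k => F k i) else 0, fun x => ?_⟩
    have hcol : ∀ k, ∑ i : Fin n, F k i = 0 := by
      intro k
      have := congrFun h k
      simpa [mulVec, dotProduct] using this
    have step : ∀ i : Fin n,
        (∑ j : Fin n, if i < j then (x i - x j) •
          (if j = last then (fun k => F k i) else (0 : Fin m → ℝ)) else 0)
        = (x i - x last) • (fun k => F k i) := by
      intro i
      rw [Finset.sum_eq_single last]
      · rcases lt_or_ge i last with hi | hi
        · simp [hi]
        · have : ¬ i < last := not_lt.mpr hi
          have hile : i = last := le_antisymm (Fin.le_def.mpr (Nat.le_sub_one_of_lt i.isLt)) hi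
          simp [this, hile]
      · intro b _ hb
        simp [hb]
      · simp
    calc F.mulVec x = ∑ i : Fin n, (x i - x last) • (fun k => F k i) := by
          funext k
          simp only [mulVec, dotProduct, Finset.sum_apply, Pi.smul_apply, smul_eq_mul]
          have : ∑ i : Fin n, (x i - x last) * F k i
              = (∑ i : Fin n, x i * F k i) - x last * ∑ i : Fin n, F k i := by
            rw [Finset.mul_sum, ← Finset.sum_sub_distrib]
            congr 1; funext i; ring
          rw [this, hcol k, mul_zero, sub_zero]
          congr 1; funext i; ring
      _ = _ := by
          rw [Finset.sum_congr rfl (fun i _ => (step i).symm)]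
end

section
/- Let C₂ be a p × n real measurement matrix (each row contains exactly one entry equal to 1 and exactly one entry equal to −1 with all other entries 0, and C₂ has full row rank), and let F be an m × n real matrix. Then there exists an m × p real matrix K satisfying K C₂ = F if and only if F · E^{(c)} = 0 for every connected component c of the measurement graph of C₂, where E^{(c)} ∈ ℝ^n is the indicator vector whose j-th entry is 1 if vertex j lies in component c and 0 otherwise. -/
open Matrix BigOperators

attribute [local instance] Classical.propDecidable

/-- `C₂` is a measurement matrix: each row contains exactly one entry equal to `1` and
exactly one entry equal to `-1`, all other entries are `0`, and `C₂` has full row rank. -/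
def IsMeasurementMatrix {p n : ℕ} (C₂ : Matrix (Fin p) (Fin n) ℝ) : Prop :=
  (∀ ℓ : Fin p, ∃ i j : Fin n, i ≠ j ∧ C₂ ℓ i = 1 ∧ C₂ ℓ j = -1 ∧
    ∀ k : Fin n, k ≠ i → k ≠ j → C₂ ℓ k = 0) ∧ C₂.rank = p

/-- The measurement graph of `C₂`: the simple graph on `{1,…,n}` with an edge between
distinct `i` and `j` exactly when some row `ℓ` has `C₂ ℓ i ≠ 0` and `C₂ ℓ j ≠ 0`. -/
def measGraph {p n : ℕ} (C₂ : Matrix (Fin p) (Fin n) ℝ) : SimpleGraph (Fin n) :=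
  SimpleGraph.fromRel (fun i j => ∃ ℓ : Fin p, C₂ ℓ i ≠ 0 ∧ C₂ ℓ j ≠ 0)

/-- The indicator vector `E^{(c)} ∈ ℝ^n` of a connected component `c` of a graph `G`. -/
noncomputable def componentIndicator {n : ℕ} (G : SimpleGraph (Fin n))
    (c : G.ConnectedComponent) : Fin n → ℝ :=
  fun j => if G.connectedComponentMk j = c then 1 else 0

/-!
Row `ℓ` of a measurement matrix is `e_i - e_j` for an edge `ij` of the measurement graph, so
`C₂ x = 0` exactly when `x` is constant along edges, i.e. on connected components; hence
`ker C₂` is spanned by the indicators `E^{(c)}`. Over a field, `F = K C₂` is solvable exactly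
when `ker C₂ ⊆ ker F`, which therefore amounts to `F E^{(c)} = 0` for every `c`.
-/

theorem LinearMap.exists_comp_eq_of_ker_le {K V W U : Type*} [Field K] [AddCommGroup V]
    [Module K V] [AddCommGroup W] [Module K W] [AddCommGroup U] [Module K U]
    (f : V →ₗ[K] W) (g : V →ₗ[K] U) (h : ker f ≤ ker g) : ∃ k : W →ₗ[K] U, k ∘ₗ f = g := by
  -- `f` descends to an injective map on `V ⧸ ker f`; compose a left inverse of it with `g`.
  obtain ⟨r, hr⟩ := ((ker f).liftQ f le_rfl).exists_leftInverse_of_injective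
    ((ker f).ker_liftQ_eq_bot f le_rfl le_rfl)
  refine ⟨(ker f).liftQ g h ∘ₗ r, ?_⟩
  calc (ker f).liftQ g h ∘ₗ r ∘ₗ f
      = (ker f).liftQ g h ∘ₗ (r ∘ₗ (ker f).liftQ f le_rfl) ∘ₗ (ker f).mkQ := by
        rw [LinearMap.comp_assoc, Submodule.liftQ_mkQ]
    _ = g := by rw [hr, LinearMap.id_comp, Submodule.liftQ_mkQ]

theorem Matrix.exists_mul_eq_iff_forall_mulVec_eq_zero {K m n p : Type*} [Field K]
    [Fintype n] [Fintype p] [DecidableEq p] (A : Matrix p n K) (F : Matrix m n K) :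
    (∃ B : Matrix m p K, B * A = F) ↔ ∀ x, A *ᵥ x = 0 → F *ᵥ x = 0 := by
  constructor
  · rintro ⟨B, rfl⟩ x hx
    rw [← mulVec_mulVec, hx, mulVec_zero]
  · intro h
    obtain ⟨k, hk⟩ := LinearMap.exists_comp_eq_of_ker_le A.mulVecLin F.mulVecLin h
    refine ⟨LinearMap.toMatrix' k, ?_⟩
    apply Matrix.toLin'.injective
    rwa [toLin'_mul, toLin'_toMatrix']

theorem SimpleGraph.Reachable.eq_of_forall_adj {V β : Type*} {G : SimpleGraph V} {f : V → β}
    (hf : ∀ i j, G.Adj i j → f i = f j) {u v : V} (h : G.Reachable u v) : f u = f v := by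
  obtain ⟨w⟩ := h
  induction w with
  | nil => rfl
  | cons ha _ ih => exact (hf _ _ ha).trans ih

theorem sum_smul_componentIndicator {n : ℕ} (G : SimpleGraph (Fin n))
    (y : G.ConnectedComponent → ℝ) :
    ∑ c, y c • componentIndicator G c = fun j => y (G.connectedComponentMk j) := by
  funext j
  simp [componentIndicator, Finset.sum_apply]

namespace IsMeasurementMatrix

variable {p n : ℕ} {C₂ : Matrix (Fin p) (Fin n) ℝ}

theorem exists_row_eq (hC : IsMeasurementMatrix C₂) (ℓ : Fin p) :
    ∃ i j, i ≠ j ∧ C₂ ℓ = Pi.single i 1 - Pi.single j 1 := by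
  obtain ⟨i, j, hij, hi, hj, h0⟩ := hC.1 ℓ
  refine ⟨i, j, hij, funext fun k => ?_⟩
  by_cases hki : k = i
  · subst hki; simp [hi, hij]
  by_cases hkj : k = j
  · subst hkj; simp [hj, hki]
  simp [h0 k hki hkj, hki, hkj]

theorem measGraph_adj_iff (hC : IsMeasurementMatrix C₂) {i j : Fin n} :
    (measGraph C₂).Adj i j ↔ i ≠ j ∧ ∃ ℓ, C₂ ℓ = Pi.single i 1 - Pi.single j 1 ∨
      C₂ ℓ = Pi.single j 1 - Pi.single i 1 := by
  simp only [measGraph, SimpleGraph.fromRel_adj]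
  constructor
  · rintro ⟨hij, hrel⟩
    obtain ⟨ℓ, hi, hj⟩ : ∃ ℓ, C₂ ℓ i ≠ 0 ∧ C₂ ℓ j ≠ 0 :=
      hrel.elim id fun ⟨ℓ, hj, hi⟩ => ⟨ℓ, hi, hj⟩
    obtain ⟨a, b, hab, hℓ⟩ := hC.exists_row_eq ℓ
    have support {k : Fin n} (hk : C₂ ℓ k ≠ 0) : k = a ∨ k = b := by
      by_contra! h
      simp [hℓ, h.1, h.2] at hk
    refine ⟨hij, ℓ, ?_⟩
    rcases support hi with rfl | rfl <;> rcases support hj with rfl | rfl <;> simp_all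
  · rintro ⟨hij, ℓ, hℓ | hℓ⟩
    · exact ⟨hij, .inl ⟨ℓ, by simp [hℓ, hij], by simp [hℓ, hij.symm]⟩⟩
    · exact ⟨hij, .inr ⟨ℓ, by simp [hℓ, hij.symm], by simp [hℓ, hij]⟩⟩

theorem mulVec_eq_zero_iff (hC : IsMeasurementMatrix C₂) {x : Fin n → ℝ} :
    C₂ *ᵥ x = 0 ↔ ∀ i j, (measGraph C₂).Adj i j → x i = x j := by
  have row_dot (i j : Fin n) : (Pi.single i 1 - Pi.single j 1 : Fin n → ℝ) ⬝ᵥ x = x i - x j := by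
    simp [sub_dotProduct, single_dotProduct]
  constructor
  · intro hx i j hij
    obtain ⟨-, ℓ, hℓ | hℓ⟩ := hC.measGraph_adj_iff.1 hij
    all_goals
      have hxℓ := congrFun hx ℓ
      rw [mulVec, hℓ, row_dot, Pi.zero_apply] at hxℓ
      linarith
  · intro h
    funext ℓ
    obtain ⟨i, j, hij, hℓ⟩ := hC.exists_row_eq ℓ
    rw [mulVec, hℓ, row_dot, Pi.zero_apply, sub_eq_zero]
    exact h i j (hC.measGraph_adj_iff.2 ⟨hij, ℓ, .inl hℓ⟩)

theorem mulVec_componentIndicator (hC : IsMeasurementMatrix C₂)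
    (c : (measGraph C₂).ConnectedComponent) :
    C₂ *ᵥ componentIndicator (measGraph C₂) c = 0 :=
  hC.mulVec_eq_zero_iff.2 fun i j hij => by
    simp only [componentIndicator, SimpleGraph.ConnectedComponent.connectedComponentMk_eq_of_adj hij]

theorem eq_sum_smul_componentIndicator (hC : IsMeasurementMatrix C₂) {x : Fin n → ℝ}
    (hx : C₂ *ᵥ x = 0) :
    x = ∑ c, x c.out • componentIndicator (measGraph C₂) c := by
  rw [sum_smul_componentIndicator]
  funext j
  have hreach : (measGraph C₂).Reachable j ((measGraph C₂).connectedComponentMk j).out :=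
    SimpleGraph.ConnectedComponent.exact (Quot.out_eq _).symm
  exact hreach.eq_of_forall_adj (hC.mulVec_eq_zero_iff.1 hx)

end IsMeasurementMatrix

/-- For a measurement matrix `C₂` and an `m × n` matrix `F`, there exists
`K` with `K C₂ = F` iff `F · E^{(c)} = 0` for every connected component `c` of the
measurement graph of `C₂`. -/
theorem exists_factor_through_measurement_iff_components (m p n : ℕ)
    (C₂ : Matrix (Fin p) (Fin n) ℝ) (hC : IsMeasurementMatrix C₂)
    (F : Matrix (Fin m) (Fin n) ℝ) :
    (∃ K : Matrix (Fin m) (Fin p) ℝ, K * C₂ = F) ↔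
    ∀ c : (measGraph C₂).ConnectedComponent,
      F.mulVec (componentIndicator (measGraph C₂) c) = 0 := by
  rw [Matrix.exists_mul_eq_iff_forall_mulVec_eq_zero]
  refine ⟨fun h c => h _ (hC.mulVec_componentIndicator c), fun h x hx => ?_⟩
  rw [hC.eq_sum_smul_componentIndicator hx, mulVec_sum]
  simp [mulVec_smul, h]
end

section
/- Let A_R ∈ ℝ^{q×q}, B_R ∈ ℝ^{q×n}, C_R ∈ ℝ^{m×q}, D_R ∈ ℝ^{m×n} be state-space matrices with B_R · 𝟙 = 0 and D_R · 𝟙 = 0 (𝟙 ∈ ℝ^n the vector of all ones), and let C₂ be a p × n real measurement matrix (each row contains exactly one entry equal to 1 and exactly one entry equal to −1 with all other entries 0, and C₂ has full row rank) whose measurement graph is connected. Then there exist matrices B_K ∈ ℝ^{q×p} and D_K ∈ ℝ^{m×p} such that B_K C₂ = B_R and D_K C₂ = D_R; consequently, for every real s such that sI − A_R is invertible, (C_R (sI − A_R)^{-1} B_K + D_K) C₂ = C_R (sI − A_R)^{-1} B_R + D_R. -/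
open Matrix BigOperators

/-- the sum-of-coordinates functional -/
noncomputable def sumFun (n : ℕ) : (Fin n → ℝ) →ₗ[ℝ] ℝ where
  toFun v := ∑ i, v i
  map_add' x y := by simp [Finset.sum_add_distrib]
  map_smul' c x := by simp [Finset.mul_sum]

lemma row_sum_of_row {p n : ℕ} {C₂ : Matrix (Fin p) (Fin n) ℝ}
    (hC : IsMeasurementMatrix C₂) (ℓ : Fin p) (x : Fin n → ℝ)
    {a b : Fin n} (hab : a ≠ b) (ha : C₂ ℓ a = 1) (hb : C₂ ℓ b = -1)
    (hz : ∀ k : Fin n, k ≠ a → k ≠ b → C₂ ℓ k = 0) :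
    ∑ k, C₂ ℓ k * x k = x a - x b := by
  rw [← Finset.sum_subset (Finset.subset_univ ({a, b} : Finset (Fin n)))]
  · rw [Finset.sum_pair hab, ha, hb]; ring
  · intro k _ hk
    simp only [Finset.mem_insert, Finset.mem_singleton, not_or] at hk
    rw [hz k hk.1 hk.2, zero_mul]

lemma rows_span {p n : ℕ} (C₂ : Matrix (Fin p) (Fin n) ℝ)
    (hC : IsMeasurementMatrix C₂) (hconn : (measGraph C₂).Connected)
    (v : Fin n → ℝ) (hv : ∑ i, v i = 0) :
    ∃ y : Fin p → ℝ, Matrix.vecMul y C₂ = v := by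
  classical
  have hn : 0 < n := Fin.pos_iff_nonempty.2 hconn.nonempty
  -- kernel of mulVecLin is contained in span of ones
  have hadj : ∀ x : Fin n → ℝ, C₂.mulVec x = 0 →
      ∀ i j, (measGraph C₂).Adj i j → x i = x j := by
    intro x hx i j hij
    rw [measGraph, SimpleGraph.fromRel_adj] at hij
    obtain ⟨hne, h⟩ := hij
    have key : ∀ i' j' : Fin n, i' ≠ j' → (∃ ℓ : Fin p, C₂ ℓ i' ≠ 0 ∧ C₂ ℓ j' ≠ 0) →
        x i' = x j' := by
      intro i' j' hne' ⟨ℓ, hi', hj'⟩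
      obtain ⟨a, b, hab, ha, hb, hz⟩ := hC.1 ℓ
      have heq : x a - x b = 0 := by
        rw [← row_sum_of_row hC ℓ x hab ha hb hz]
        have := congrFun hx ℓ
        simpa [Matrix.mulVec, dotProduct] using this
      have hi2 : i' = a ∨ i' = b := by
        by_contra hcon
        push_neg at hcon
        exact hi' (hz i' hcon.1 hcon.2)
      have hj2 : j' = a ∨ j' = b := by
        by_contra hcon
        push_neg at hcon
        exact hj' (hz j' hcon.1 hcon.2)
      rcases hi2 with rfl | rfl <;> rcases hj2 with rfl | rfl
      · rfl
      · linarith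
      · linarith
      · rfl
    rcases h with h | h
    · exact key i j hne h
    · exact (key j i (Ne.symm hne) h).symm
  have hker : LinearMap.ker C₂.mulVecLin ≤ Submodule.span ℝ {(fun _ => 1 : Fin n → ℝ)} := by
    intro x hx
    rw [LinearMap.mem_ker] at hx
    have hconst : ∀ i j, x i = x j := by
      intro i j
      obtain ⟨w⟩ := hconn.preconnected i j
      induction w with
      | nil => rfl
      | cons h w ih => exact (hadj x hx _ _ h).trans ih
    rw [Submodule.mem_span_singleton]
    exact ⟨x ⟨0, hn⟩, by funext i; simp [hconst i ⟨0, hn⟩]⟩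
  have hkerfr : Module.finrank ℝ (LinearMap.ker C₂.mulVecLin) ≤ 1 := by
    calc Module.finrank ℝ (LinearMap.ker C₂.mulVecLin)
        ≤ Module.finrank ℝ (Submodule.span ℝ {(fun _ => 1 : Fin n → ℝ)}) :=
          Submodule.finrank_mono hker
      _ = 1 := finrank_span_singleton (by
          intro h; have := congrFun h ⟨0, hn⟩; simp at this)
  -- rank-nullity : p + dim ker = n
  have hrn := LinearMap.finrank_range_add_finrank_ker C₂.mulVecLin
  rw [show Module.finrank ℝ (LinearMap.range C₂.mulVecLin) = C₂.rank from rfl, hC.2,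
    Module.finrank_pi] at hrn
  simp only [Fintype.card_fin] at hrn
  have hp : n - 1 ≤ p := by omega
  -- the hyperplane H
  set H := LinearMap.ker (sumFun n) with hH
  have hphi_ne : sumFun n ≠ 0 := by
    intro h
    have := congrFun (congrArg DFunLike.coe h) (fun _ => (1:ℝ))
    simp [sumFun] at this
    omega
  have hHfr : Module.finrank ℝ H = n - 1 := by
    have h1 := LinearMap.finrank_range_add_finrank_ker (sumFun n)
    have hr : LinearMap.range (sumFun n) = ⊤ := by
      rcases (sumFun n).surjective_or_eq_zero with hs | hz
      · exact LinearMap.range_eq_top.2 hs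
      · exact absurd hz hphi_ne
    rw [hr, finrank_top, Module.finrank_self, Module.finrank_pi] at h1
    simp only [Fintype.card_fin] at h1
    rw [hH]
    omega
  -- range of transpose
  have hle : LinearMap.range (C₂ᵀ.mulVecLin) ≤ H := by
    rintro _ ⟨y, rfl⟩
    rw [hH, LinearMap.mem_ker]
    show ∑ j, (C₂ᵀ.mulVec y) j = 0
    have : ∀ j, C₂ᵀ.mulVec y j = ∑ ℓ, y ℓ * C₂ ℓ j := by
      intro j; simp [Matrix.mulVec, dotProduct, Matrix.transpose, mul_comm]
    simp_rw [this]
    rw [Finset.sum_comm]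
    have hrow : ∀ ℓ, ∑ j, y ℓ * C₂ ℓ j = 0 := by
      intro ℓ
      obtain ⟨a, b, hab, ha, hb, hz⟩ := hC.1 ℓ
      rw [← Finset.mul_sum]
      have : ∑ j, C₂ ℓ j = 0 := by
        have := row_sum_of_row hC ℓ (fun _ => (1:ℝ)) hab ha hb hz
        simpa using this
      rw [this, mul_zero]
    simp [hrow]
  have hfrT : Module.finrank ℝ (LinearMap.range (C₂ᵀ.mulVecLin)) = p := by
    rw [show Module.finrank ℝ (LinearMap.range (C₂ᵀ.mulVecLin)) = C₂ᵀ.rank from rfl,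
      Matrix.rank_transpose, hC.2]
  have hple : p ≤ n - 1 := by
    have := Submodule.finrank_mono hle
    rw [hfrT, hHfr] at this
    exact this
  have hpeq : p = n - 1 := le_antisymm hple hp
  have heq : LinearMap.range (C₂ᵀ.mulVecLin) = H :=
    Submodule.eq_of_le_of_finrank_eq hle (by rw [hfrT, hHfr, hpeq])
  have hvH : v ∈ H := by rw [hH, LinearMap.mem_ker]; exact hv
  rw [← heq] at hvH
  obtain ⟨y, hy⟩ := hvH
  refine ⟨y, ?_⟩
  funext j
  rw [← hy]
  simp [Matrix.mulVec, Matrix.vecMul, dotProduct, Matrix.transpose, mul_comm]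

lemma factor_matrix {p n k : ℕ} (C₂ : Matrix (Fin p) (Fin n) ℝ)
    (hC : IsMeasurementMatrix C₂) (hconn : (measGraph C₂).Connected)
    (M : Matrix (Fin k) (Fin n) ℝ) (hM : M.mulVec (fun _ => (1 : ℝ)) = 0) :
    ∃ K : Matrix (Fin k) (Fin p) ℝ, K * C₂ = M := by
  classical
  have hrow : ∀ i, ∃ y : Fin p → ℝ, Matrix.vecMul y C₂ = M i := by
    intro i
    apply rows_span C₂ hC hconn
    have := congrFun hM i
    simpa [Matrix.mulVec, dotProduct] using this
  choose K hK using hrow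
  refine ⟨Matrix.of K, ?_⟩
  ext i j
  rw [Matrix.mul_apply]
  have := congrFun (hK i) j
  simpa [Matrix.vecMul, dotProduct] using this

/-- If `(A_R, B_R, C_R, D_R)` is a state-space system with `B_R 𝟙 = 0`
and `D_R 𝟙 = 0`, and `C₂` is a measurement matrix with connected measurement graph,
then there are `B_K, D_K` with `B_K C₂ = B_R`, `D_K C₂ = D_R`; consequently the
transfer functions agree: for every real `s` with `sI - A_R` invertible,
`(C_R (sI - A_R)⁻¹ B_K + D_K) C₂ = C_R (sI - A_R)⁻¹ B_R + D_R`. -/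
theorem relative_system_factors_through_measurement (q m p n : ℕ)
    (A_R : Matrix (Fin q) (Fin q) ℝ) (B_R : Matrix (Fin q) (Fin n) ℝ)
    (C_R : Matrix (Fin m) (Fin q) ℝ) (D_R : Matrix (Fin m) (Fin n) ℝ)
    (hB : B_R.mulVec (fun _ => (1 : ℝ)) = 0) (hD : D_R.mulVec (fun _ => (1 : ℝ)) = 0)
    (C₂ : Matrix (Fin p) (Fin n) ℝ)
    (hC : IsMeasurementMatrix C₂) (hconn : (measGraph C₂).Connected) :
    ∃ (B_K : Matrix (Fin q) (Fin p) ℝ) (D_K : Matrix (Fin m) (Fin p) ℝ),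
      B_K * C₂ = B_R ∧ D_K * C₂ = D_R ∧
      ∀ s : ℝ, IsUnit (s • (1 : Matrix (Fin q) (Fin q) ℝ) - A_R) →
        (C_R * (s • (1 : Matrix (Fin q) (Fin q) ℝ) - A_R)⁻¹ * B_K + D_K) * C₂ =
          C_R * (s • (1 : Matrix (Fin q) (Fin q) ℝ) - A_R)⁻¹ * B_R + D_R := by
  obtain ⟨B_K, hBK⟩ := factor_matrix C₂ hC hconn B_R hB
  obtain ⟨D_K, hDK⟩ := factor_matrix C₂ hC hconn D_R hD
  refine ⟨B_K, D_K, hBK, hDK, fun s _ => ?_⟩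
  rw [Matrix.add_mul, Matrix.mul_assoc _ B_K C₂, hBK, hDK, Matrix.mul_assoc]
end

section
/- Work with matrices over the field of real rational functions RatFunc ℝ. Let R_nom be an l × n matrix, P an n × l matrix, and Q an l × n matrix over RatFunc ℝ, and let E ∈ ℝ^n be a fixed real vector (embedded entrywise into RatFunc ℝ). Assume I − R_nom P is invertible, set M = P (I − R_nom P)^{-1}, assume I − M Q is invertible, and define R = R_nom − Q (I − M Q)^{-1}. If R_nom · E = 0, then R · E = 0 if and only if Q · E = 0. -/
open Matrix BigOperators

/-- Over transfer matrices with entries in `RatFunc ℝ`, with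
`M = P (I - R_nom P)⁻¹` and `R = R_nom - Q (I - M Q)⁻¹`, if `R_nom · E = 0`
(for a fixed real vector `E` embedded entrywise), then `R · E = 0 ↔ Q · E = 0`. -/
theorem lft_relative_iff (l n : ℕ)
    (Rnom : Matrix (Fin l) (Fin n) (RatFunc ℝ))
    (P : Matrix (Fin n) (Fin l) (RatFunc ℝ))
    (Q : Matrix (Fin l) (Fin n) (RatFunc ℝ))
    (E : Fin n → ℝ)
    (h1 : IsUnit ((1 : Matrix (Fin l) (Fin l) (RatFunc ℝ)) - Rnom * P))
    (M : Matrix (Fin n) (Fin l) (RatFunc ℝ))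
    (hM : M = P * ((1 : Matrix (Fin l) (Fin l) (RatFunc ℝ)) - Rnom * P)⁻¹)
    (h2 : IsUnit ((1 : Matrix (Fin n) (Fin n) (RatFunc ℝ)) - M * Q))
    (R : Matrix (Fin l) (Fin n) (RatFunc ℝ))
    (hR : R = Rnom - Q * ((1 : Matrix (Fin n) (Fin n) (RatFunc ℝ)) - M * Q)⁻¹)
    (hnom : Rnom.mulVec (fun j => algebraMap ℝ (RatFunc ℝ) (E j)) = 0) :
    R.mulVec (fun j => algebraMap ℝ (RatFunc ℝ) (E j)) = 0 ↔
      Q.mulVec (fun j => algebraMap ℝ (RatFunc ℝ) (E j)) = 0 := by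
  set e : Fin n → RatFunc ℝ := fun j => algebraMap ℝ (RatFunc ℝ) (E j) with he
  set S : Matrix (Fin n) (Fin n) (RatFunc ℝ) := 1 - M * Q with hS
  have hdet : IsUnit S.det := (Matrix.isUnit_iff_isUnit_det S).mp h2
  have hSinv : S * S⁻¹ = 1 := Matrix.mul_nonsing_inv S hdet
  have hinvS : S⁻¹ * S = 1 := Matrix.nonsing_inv_mul S hdet
  have hRe : R.mulVec e = -(Q.mulVec (S⁻¹.mulVec e)) := by
    rw [hR, Matrix.sub_mulVec, hnom, Matrix.mulVec_mulVec, ← Matrix.mulVec_mulVec]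
    simp
  constructor
  · intro h
    have hQv : Q.mulVec (S⁻¹.mulVec e) = 0 := by
      rw [hRe] at h; simpa [neg_eq_zero] using h
    have heq : e = S⁻¹.mulVec e := by
      calc e = (S * S⁻¹).mulVec e := by rw [hSinv, Matrix.one_mulVec]
        _ = S.mulVec (S⁻¹.mulVec e) := by rw [← Matrix.mulVec_mulVec]
        _ = S⁻¹.mulVec e - M.mulVec (Q.mulVec (S⁻¹.mulVec e)) := by
            rw [hS, Matrix.sub_mulVec, Matrix.one_mulVec, ← Matrix.mulVec_mulVec]
        _ = S⁻¹.mulVec e := by rw [hQv]; simp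
    rw [heq.symm] at hQv
    exact hQv
  · intro h
    have heq : S⁻¹.mulVec e = e := by
      have hSe : S.mulVec e = e := by
        rw [hS, Matrix.sub_mulVec, Matrix.one_mulVec, ← Matrix.mulVec_mulVec, h]
        simp
      calc S⁻¹.mulVec e = S⁻¹.mulVec (S.mulVec e) := by rw [hSe]
        _ = (S⁻¹ * S).mulVec e := by rw [Matrix.mulVec_mulVec]
        _ = e := by rw [hinvS, Matrix.one_mulVec]
    rw [hRe, heq, h]; simp
end
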